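/- On ℙ¹ × ℙ¹, the total Ext algebra of O(0,-1) with the Koszul-type self-extensions determined by the normal bundle N = O(-1,-1)^{⊕2} satisfies: ⊕_{p,q} H^p(ℙ¹×ℙ¹, Λ^q N^∨) is 1-dimensional in total degrees 0 and 4 and zero in all other total degrees, i.e., it is isomorphic as a graded vector space to H^*(S⁴; ℂ). -/

import Mathlib

/-! The cohomology of `ℙ¹` is one-dimensional and concentrated in a single degree for
`O` (degree 0) and `O(-2)` (degree 1), and vanishes for `O(-1)`. By Künneth, on `ℙ¹ × ℙ¹`
the sheaf `O` contributes a line in degree `0`, `O(-1,-1)` contributes nothing, and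
`O(-2,-2)` contributes a line in degree `2`, which the shift by `q = 2` moves to total
degree `4`. -/

section Kunneth

variable {h : ℕ → ℤ → ℕ} {h2 : ℕ → ℤ → ℤ → ℕ}
  (kunneth : ∀ i (a b : ℤ), h2 i a b = ∑ p ∈ Finset.range (i + 1), h p a * h (i - p) b)
include kunneth

theorem kunneth_eq_zero_of_left {a : ℤ} (ha : ∀ p, h p a = 0) (i : ℕ) (b : ℤ) :
    h2 i a b = 0 := by
  simp [kunneth, ha]

theorem kunneth_eq_single {a b : ℤ} {m n : ℕ} (ha : ∀ p, h p a = if p = m then 1 else 0)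
    (hb : ∀ p, h p b = if p = n then 1 else 0) (i : ℕ) :
    h2 i a b = if i = m + n then 1 else 0 := by
  simp only [kunneth, ha, hb, ite_mul, one_mul, zero_mul, Finset.sum_ite_eq',
    Finset.mem_range]
  split_ifs <;> omega

end Kunneth

section ProjectiveLine

variable {h : ℕ → ℤ → ℕ}
  (h0' : ∀ b : ℤ, b < 0 → h 0 b = 0)
  (hserre : ∀ b : ℤ, h 1 b = h 0 (-b - 2))
  (htop : ∀ i, 2 ≤ i → ∀ b : ℤ, h i b = 0)
include h0' hserre htop

theorem cohomology_P1_zero (h0 : ∀ b : ℤ, 0 ≤ b → h 0 b = (b + 1).toNat) (p : ℕ) :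
    h p 0 = if p = 0 then 1 else 0 := by
  match p with
  | 0 => simpa using h0 0 le_rfl
  | 1 => simpa [hserre] using h0' (-2) (by norm_num)
  | p + 2 => simpa using htop (p + 2) (by omega) 0

theorem cohomology_P1_neg_one (p : ℕ) : h p (-1) = 0 := by
  match p with
  | 0 => exact h0' (-1) (by norm_num)
  | 1 => simpa [hserre] using h0' (-1) (by norm_num)
  | p + 2 => exact htop (p + 2) (by omega) (-1)

theorem cohomology_P1_neg_two (h0 : ∀ b : ℤ, 0 ≤ b → h 0 b = (b + 1).toNat) (p : ℕ) :
    h p (-2) = if p = 1 then 1 else 0 := by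
  match p with
  | 0 => simpa using h0' (-2) (by norm_num)
  | 1 => simpa [hserre] using h0 0 le_rfl
  | p + 2 => simpa using htop (p + 2) (by omega) (-2)

end ProjectiveLine

/-- On `ℙ¹ × ℙ¹`, the total Ext algebra of `O(0,-1)` with the Koszul-type
self-extensions determined by the normal bundle `N = O(-1,-1)^⊕2` is
isomorphic as a graded vector space to `H^*(S⁴; ℂ)`: one-dimensional in
total degrees `0` and `4` and zero in all other total degrees.
Here `h i b = dim H^i(ℙ¹, O(b))` and `h2 i a b = dim H^i(ℙ¹×ℙ¹, O(a,b))`,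
with the standard cohomology of `ℙ¹` and Künneth as hypotheses, and
`ext k = dim ⊕_{p+q=k} H^p(ℙ¹×ℙ¹, Λ^q N)`, where
`Λ⁰N = O`, `Λ¹N = O(-1,-1)^⊕2`, `Λ²N = O(-2,-2)`. -/
theorem ext_algebra_is_H_of_S4 (h : ℕ → ℤ → ℕ) (h2 : ℕ → ℤ → ℤ → ℕ)
    (h0 : ∀ b : ℤ, 0 ≤ b → h 0 b = (b + 1).toNat)
    (h0' : ∀ b : ℤ, b < 0 → h 0 b = 0)
    (hserre : ∀ b : ℤ, h 1 b = h 0 (-b - 2))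
    (htop : ∀ i, 2 ≤ i → ∀ b : ℤ, h i b = 0)
    (kunneth : ∀ i (a b : ℤ),
      h2 i a b = ∑ p ∈ Finset.range (i + 1), h p a * h (i - p) b)
    (ext : ℕ → ℕ)
    (hext : ∀ k, ext k =
      h2 k 0 0 + 2 * (if 1 ≤ k then h2 (k - 1) (-1) (-1) else 0)
        + if 2 ≤ k then h2 (k - 2) (-2) (-2) else 0) :
    ext 0 = 1 ∧ ext 4 = 1 ∧ ∀ k, k ≠ 0 → k ≠ 4 → ext k = 0 := by
  have hO := cohomology_P1_zero h0' hserre htop h0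
  have hO₂ := cohomology_P1_neg_two h0' hserre htop h0
  have hext' : ∀ k, ext k = (if k = 0 then 1 else 0) + if k = 4 then 1 else 0 := by
    intro k
    rw [hext, kunneth_eq_single kunneth hO hO,
      kunneth_eq_zero_of_left kunneth (cohomology_P1_neg_one h0' hserre htop),
      kunneth_eq_single kunneth hO₂ hO₂]
    split_ifs <;> omega
  refine ⟨by simp [hext'], by simp [hext'], fun k hk0 hk4 => by simp [hext', hk0, hk4]⟩
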